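/- arXiv:2603.24368 — 2 statements merged into one kernel-verified Lean document; each statement's English description precedes it below -/
import Mathlib

section
/- There exists a function S* that is continuously differentiable on [L₁,L₂], with S*(x) > 0 for all x ∈ (L₁,L₂), such that d₁(∫_{L₁}^{L₂} J₁(x−y) S*(y) dy − S*(x)) + a(x)·(S*)′(x) = 0 for every x ∈ (L₁,L₂) (existence of a disease-free equilibrium of the nonlocal dispersal–advection equation). -/
open MeasureTheory Set

/-- Hypothesis (J1) on a dispersal kernel. -/
def KernelJ1 (J : ℝ → ℝ) : Prop :=
  (∀ x, 0 ≤ J x) ∧ Continuous J ∧ Integrable J ∧ (∫ x, J x) = 1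

/-!
With `g = d1 / a` and `K u x = ∫ y in L1..L2, J1 (x - y) * u y`, the equation reads
`S' = g (S - K S)`. For a fixed right-hand side `h`, variation of constants gives the solution
`S x = e^{B x} (1 + ∫ t in x..L2, g t e^{-B t} h t)` with `B x = ∫ t in L1..x, g t`, which is
positive when `h ≥ 0`. Taking `h = K u` defines a self-map of `C([L1, L2])`. Since `J1` has
mass one, `K` does not increase sup-distances, and since
`∫ t in x..L2, g t e^{-B t} = e^{-B x} - e^{-B L2}` the map is a contraction with constant
`1 - e^{-B L2}`. It preserves the closed cone of nonnegative functions, so its fixed point is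
nonnegative, and the equilibrium it defines is positive.
-/

open Real intervalIntegral

namespace NonlocalDispersal

noncomputable def nonlocalOp (J : ℝ → ℝ) (L1 L2 : ℝ) (u : ℝ → ℝ) (x : ℝ) : ℝ :=
  ∫ y in L1..L2, J (x - y) * u y

section nonlocalOp

variable {J u v : ℝ → ℝ} {L1 L2 : ℝ}

theorem continuous_nonlocalOp (hJ : Continuous J) (hu : Continuous u) :
    Continuous (nonlocalOp J L1 L2 u) :=
  continuous_parametric_intervalIntegral_of_continuous' (by fun_prop) L1 L2

theorem nonlocalOp_nonneg (hL : L1 ≤ L2) (hJ : ∀ y, 0 ≤ J y) (hu : ∀ y ∈ Icc L1 L2, 0 ≤ u y)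
    (x : ℝ) : 0 ≤ nonlocalOp J L1 L2 u x :=
  integral_nonneg hL fun y hy => mul_nonneg (hJ _) (hu y hy)

theorem nonlocalOp_congr (h : EqOn u v (uIcc L1 L2)) :
    nonlocalOp J L1 L2 u = nonlocalOp J L1 L2 v :=
  funext fun x => integral_congr fun y hy => by rw [h hy]

theorem integral_comp_sub_le_integral (hJ0 : ∀ y, 0 ≤ J y) (hJi : Integrable J)
    (hL : L1 ≤ L2) (x : ℝ) : ∫ y in L1..L2, J (x - y) ≤ ∫ y, J y := by
  rw [integral_comp_sub_left J x, integral_of_le (by linarith)]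
  exact setIntegral_le_integral hJi (.of_forall hJ0)

theorem abs_nonlocalOp_sub_le (hJ : KernelJ1 J) (hL : L1 ≤ L2) (hu : Continuous u)
    (hv : Continuous v) {c : ℝ} (huv : ∀ y ∈ Icc L1 L2, |u y - v y| ≤ c) (x : ℝ) :
    |nonlocalOp J L1 L2 u x - nonlocalOp J L1 L2 v x| ≤ c := by
  obtain ⟨hJ0, hJc, hJi, hJ1⟩ := hJ
  have hc : 0 ≤ c := (abs_nonneg _).trans (huv L1 (left_mem_Icc.2 hL))
  have hint : ∀ w : ℝ → ℝ, Continuous w →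
      IntervalIntegrable (fun y => J (x - y) * w y) volume L1 L2 :=
    fun w hw => (by fun_prop : Continuous fun y => J (x - y) * w y).intervalIntegrable _ _
  calc |nonlocalOp J L1 L2 u x - nonlocalOp J L1 L2 v x|
      = ‖∫ y in L1..L2, J (x - y) * (u y - v y)‖ := by
        simp only [nonlocalOp, ← integral_sub (hint u hu) (hint v hv), mul_sub, Real.norm_eq_abs]
    _ ≤ ∫ y in L1..L2, J (x - y) * c := by
        refine norm_integral_le_of_norm_le hL (.of_forall fun y hy => ?_) (hint _ continuous_const)
        rw [norm_mul, Real.norm_of_nonneg (hJ0 _), Real.norm_eq_abs]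
        exact mul_le_mul_of_nonneg_left (huv y (Ioc_subset_Icc_self hy)) (hJ0 _)
    _ = (∫ y in L1..L2, J (x - y)) * c := integral_mul_const c _
    _ ≤ c := mul_le_of_le_one_left hc (hJ1 ▸ integral_comp_sub_le_integral hJ0 hJi hL x)

end nonlocalOp

/-- Variation of constants: the solution of `S' = g (S - h)` with
`S L2 = exp (∫ t in L1..L2, g t)`. -/
noncomputable def linearSolution (g h : ℝ → ℝ) (L1 L2 : ℝ) (x : ℝ) : ℝ :=
  exp (∫ t in L1..x, g t) * (1 + ∫ t in x..L2, g t * exp (-∫ s in L1..t, g s) * h t)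

section linearSolution

variable {g h h' : ℝ → ℝ} {L1 L2 : ℝ}

theorem hasDerivAt_primitive (hg : Continuous g) (x : ℝ) :
    HasDerivAt (fun x => ∫ t in L1..x, g t) (g x) x :=
  (hg.integral_hasStrictDerivAt L1 x).hasDerivAt

theorem continuous_primitive_of_continuous (hg : Continuous g) :
    Continuous fun x => ∫ t in L1..x, g t :=
  continuous_primitive (fun _ _ => hg.intervalIntegrable _ _) L1

theorem hasDerivAt_linearSolution (hg : Continuous g) (hh : Continuous h) (x : ℝ) :
    HasDerivAt (linearSolution g h L1 L2) (g x * (linearSolution g h L1 L2 x - h x)) x := by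
  have hρ : Continuous fun t => g t * exp (-∫ s in L1..t, g s) * h t := by
    have := continuous_primitive_of_continuous (L1 := L1) hg
    fun_prop
  have hW := integral_hasDerivAt_left (hρ.intervalIntegrable x L2)
    (hρ.stronglyMeasurableAtFilter _ _) hρ.continuousAt
  refine ((hasDerivAt_primitive hg x).exp.mul (hW.const_add 1)).congr_deriv ?_
  have hE : exp (∫ t in L1..x, g t) * exp (-∫ t in L1..x, g t) = 1 := by
    rw [← exp_add, add_neg_cancel, exp_zero]
  simp only [linearSolution]
  linear_combination (-(g x * h x)) * hE

theorem contDiff_linearSolution (hg : Continuous g) (hh : Continuous h) :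
    ContDiff ℝ 1 (linearSolution g h L1 L2) := by
  have hd x := hasDerivAt_linearSolution (L1 := L1) (L2 := L2) hg hh x
  have hc : Continuous (linearSolution g h L1 L2) :=
    continuous_iff_continuousAt.2 fun x => (hd x).continuousAt
  rw [contDiff_one_iff_deriv]
  refine ⟨fun x => (hd x).differentiableAt, ?_⟩
  rw [funext fun x => (hd x).deriv]
  fun_prop

theorem integral_mul_exp_neg_primitive (hg : Continuous g) (x : ℝ) :
    ∫ t in x..L2, g t * exp (-∫ s in L1..t, g s)
      = exp (-∫ s in L1..x, g s) - exp (-∫ s in L1..L2, g s) := by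
  have hB := continuous_primitive_of_continuous (L1 := L1) hg
  rw [integral_eq_sub_of_hasDerivAt (f := fun t => -exp (-∫ s in L1..t, g s))
    (fun t _ => ((hasDerivAt_primitive hg t).neg.exp.neg).congr_deriv
      (by simp only [Pi.neg_apply]; ring))
    ((by fun_prop : Continuous fun t => g t * exp (-∫ s in L1..t, g s)).intervalIntegrable _ _)]
  ring

theorem linearSolution_pos (hg : ∀ t, 0 ≤ g t) {x : ℝ} (hx : x ≤ L2)
    (hh : ∀ t ∈ Icc x L2, 0 ≤ h t) : 0 < linearSolution g h L1 L2 x := by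
  have : 0 ≤ ∫ t in x..L2, g t * exp (-∫ s in L1..t, g s) * h t :=
    integral_nonneg hx fun t ht => mul_nonneg (mul_nonneg (hg t) (exp_pos _).le) (hh t ht)
  exact mul_pos (exp_pos _) (by linarith)

theorem abs_linearSolution_sub_le (hg : Continuous g) (hg0 : ∀ t, 0 ≤ g t) (hh : Continuous h)
    (hh' : Continuous h') {x c : ℝ} (hx : x ∈ Icc L1 L2)
    (hc : ∀ t ∈ Icc x L2, |h t - h' t| ≤ c) :
    |linearSolution g h L1 L2 x - linearSolution g h' L1 L2 x|
      ≤ (1 - exp (-∫ t in L1..L2, g t)) * c := by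
  have hB := continuous_primitive_of_continuous (L1 := L1) hg
  have hc0 : 0 ≤ c := (abs_nonneg _).trans (hc x (left_mem_Icc.2 hx.2))
  have hBx : 0 ≤ ∫ t in L1..x, g t := integral_nonneg hx.1 fun t _ => hg0 t
  have hint : ∀ k : ℝ → ℝ, Continuous k →
      IntervalIntegrable (fun t => g t * exp (-∫ s in L1..t, g s) * k t) volume x L2 :=
    fun k hk => (by fun_prop : Continuous _).intervalIntegrable _ _
  calc |linearSolution g h L1 L2 x - linearSolution g h' L1 L2 x|
      = exp (∫ t in L1..x, g t) *
          ‖∫ t in x..L2, g t * exp (-∫ s in L1..t, g s) * (h t - h' t)‖ := by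
        simp only [linearSolution, ← mul_sub, add_sub_add_left_eq_sub,
          ← integral_sub (hint h hh) (hint h' hh'), abs_mul, abs_of_pos (exp_pos _),
          Real.norm_eq_abs]
    _ ≤ exp (∫ t in L1..x, g t) * ∫ t in x..L2, g t * exp (-∫ s in L1..t, g s) * c := by
        gcongr
        refine norm_integral_le_of_norm_le hx.2 (.of_forall fun t ht => ?_)
          (hint _ continuous_const)
        rw [norm_mul, Real.norm_of_nonneg (mul_nonneg (hg0 t) (exp_pos _).le), Real.norm_eq_abs]
        exact mul_le_mul_of_nonneg_left (hc t (Ioc_subset_Icc_self ht))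
          (mul_nonneg (hg0 t) (exp_pos _).le)
    _ = (1 - exp (-∫ t in L1..L2, g t) * exp (∫ t in L1..x, g t)) * c := by
        rw [intervalIntegral.integral_mul_const, integral_mul_exp_neg_primitive hg,
          exp_neg (∫ s in L1..x, g s)]
        field_simp
    _ ≤ (1 - exp (-∫ t in L1..L2, g t)) * c := by
        gcongr
        exact le_mul_of_one_le_right (exp_pos _).le (one_le_exp hBx)

end linearSolution

section fixedPoint

variable {J g : ℝ → ℝ} {L1 L2 : ℝ}

theorem linearSolution_nonlocalOp_pos (hL : L1 ≤ L2) (hg : ∀ t, 0 ≤ g t) (hJ : ∀ y, 0 ≤ J y)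
    {u : ℝ → ℝ} (hu : ∀ y ∈ Icc L1 L2, 0 ≤ u y) {x : ℝ} (hx : x ≤ L2) :
    0 < linearSolution g (nonlocalOp J L1 L2 u) L1 L2 x :=
  linearSolution_pos hg hx fun t _ => nonlocalOp_nonneg hL hJ hu t

noncomputable def equilibriumMap (hL : L1 ≤ L2) (hg : Continuous g) (hJ : Continuous J)
    (u : C(Icc L1 L2, ℝ)) : C(Icc L1 L2, ℝ) :=
  ⟨fun x => linearSolution g (nonlocalOp J L1 L2 (IccExtend hL u)) L1 L2 x,
    (contDiff_linearSolution hg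
      (continuous_nonlocalOp hJ u.continuous.Icc_extend')).continuous.comp continuous_subtype_val⟩

theorem contractingWith_equilibriumMap (hL : L1 ≤ L2) (hg : Continuous g) (hg0 : ∀ t, 0 ≤ g t)
    (hJ : KernelJ1 J) :
    ContractingWith (1 - exp (-∫ t in L1..L2, g t)).toNNReal (equilibriumMap hL hg hJ.2.1) := by
  have hθ : 0 ≤ 1 - exp (-∫ t in L1..L2, g t) :=
    sub_nonneg.2 (exp_le_one_iff.2 (neg_nonpos.2 (integral_nonneg hL fun t _ => hg0 t)))
  refine ⟨?_, LipschitzWith.of_dist_le_mul fun u v => ?_⟩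
  · rw [← NNReal.coe_lt_coe, Real.coe_toNNReal _ hθ, NNReal.coe_one]
    linarith [exp_pos (-∫ t in L1..L2, g t)]
  rw [Real.coe_toNNReal _ hθ]
  refine (ContinuousMap.dist_le (mul_nonneg hθ dist_nonneg)).2 fun x => ?_
  refine abs_linearSolution_sub_le hg hg0 (continuous_nonlocalOp hJ.2.1 u.continuous.Icc_extend')
    (continuous_nonlocalOp hJ.2.1 v.continuous.Icc_extend') x.2 fun t _ =>
      abs_nonlocalOp_sub_le hJ hL u.continuous.Icc_extend' v.continuous.Icc_extend'
        (fun y hy => ?_) t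
  rw [IccExtend_of_mem _ _ hy, IccExtend_of_mem _ _ hy, ← Real.dist_eq]
  exact u.dist_apply_le_dist ⟨y, hy⟩

theorem exists_nonneg_isFixedPt_equilibriumMap (hL : L1 ≤ L2) (hg : Continuous g)
    (hg0 : ∀ t, 0 ≤ g t) (hJ : KernelJ1 J) :
    ∃ S : C(Icc L1 L2, ℝ), (∀ x, 0 ≤ S x) ∧
      Function.IsFixedPt (equilibriumMap hL hg hJ.2.1) S := by
  set T := equilibriumMap hL hg hJ.2.1
  set s := {u : C(Icc L1 L2, ℝ) | ∀ x, 0 ≤ u x}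
  have hs : IsClosed s := by
    simp only [s, ofPred_forall]
    exact isClosed_iInter fun x => isClosed_le continuous_const (continuous_eval_const x)
  have hTs : MapsTo T s s := fun u hu x =>
    (linearSolution_nonlocalOp_pos hL hg0 hJ.1
      (fun y hy => by rw [IccExtend_of_mem _ _ hy]; exact hu _) x.2.2).le
  obtain ⟨S, hS, hfix, -⟩ :=
    ((contractingWith_equilibriumMap hL hg hg0 hJ).restrict hTs).exists_fixedPoint'
      hs.isComplete hTs (x := 0) (fun _ => le_rfl) (edist_ne_top _ _)
  exact ⟨S, hS, hfix⟩

theorem exists_pos_hasDerivAt_eq_mul_sub_nonlocalOp (hL : L1 ≤ L2) (hg : Continuous g)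
    (hg0 : ∀ t, 0 ≤ g t) (hJ : KernelJ1 J) :
    ∃ S : ℝ → ℝ, ContDiff ℝ 1 S ∧ (∀ x ∈ Icc L1 L2, 0 < S x) ∧
      ∀ x, HasDerivAt S (g x * (S x - nonlocalOp J L1 L2 S x)) x := by
  obtain ⟨S, hS0, hfix⟩ := exists_nonneg_isFixedPt_equilibriumMap hL hg hg0 hJ
  have hSc : Continuous (IccExtend hL S) := S.continuous.Icc_extend'
  set Sstar := linearSolution g (nonlocalOp J L1 L2 (IccExtend hL S)) L1 L2
  have hK : nonlocalOp J L1 L2 Sstar = nonlocalOp J L1 L2 (IccExtend hL S) := by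
    refine nonlocalOp_congr fun y hy => ?_
    rw [uIcc_of_le hL] at hy
    rw [IccExtend_of_mem _ _ hy, ← hfix]
    rfl
  refine ⟨Sstar, contDiff_linearSolution hg (continuous_nonlocalOp hJ.2.1 hSc),
    fun x hx => linearSolution_nonlocalOp_pos hL hg0 hJ.1
      (fun y hy => by rw [IccExtend_of_mem _ _ hy]; exact hS0 _) hx.2, fun x => ?_⟩
  rw [hK]
  exact hasDerivAt_linearSolution hg (continuous_nonlocalOp hJ.2.1 hSc) x

end fixedPoint

end NonlocalDispersal

/-- existence of a disease-free equilibrium of the nonlocal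
dispersal–advection equation. -/
theorem disease_free_equilibrium_exists
    (L1 L2 d1 : ℝ) (hL : L1 < L2) (hd1 : 0 < d1)
    (J1 : ℝ → ℝ) (hJ1 : KernelJ1 J1)
    (a : ℝ → ℝ) (ha : ContinuousOn a (Icc L1 L2))
    (hapos : ∀ x ∈ Icc L1 L2, 0 < a x) :
    ∃ Sstar : ℝ → ℝ,
      ContDiffOn ℝ 1 Sstar (Icc L1 L2) ∧
      (∀ x ∈ Ioo L1 L2, 0 < Sstar x) ∧
      (∀ x ∈ Ioo L1 L2,
        d1 * ((∫ y in L1..L2, J1 (x - y) * Sstar y) - Sstar x)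
          + a x * derivWithin Sstar (Icc L1 L2) x = 0) := by
  set A := IccExtend hL.le ((Icc L1 L2).domRestrict a)
  have hA : Continuous A := ha.domRestrict.Icc_extend'
  have hApos : ∀ x, 0 < A x := fun x => hapos _ (projIcc L1 L2 hL.le x).2
  obtain ⟨S, hSC, hSpos, hSd⟩ :=
    NonlocalDispersal.exists_pos_hasDerivAt_eq_mul_sub_nonlocalOp hL.le (g := fun x => d1 / A x)
      (continuous_const.div hA fun x => (hApos x).ne') (fun x => (div_pos hd1 (hApos x)).le) hJ1
  refine ⟨S, hSC.contDiffOn, fun x hx => hSpos x (Ioo_subset_Icc_self hx), fun x hx => ?_⟩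
  have hAx : A x = a x := IccExtend_of_mem _ _ (Ioo_subset_Icc_self hx)
  rw [derivWithin_of_mem_nhds (Icc_mem_nhds hx.1 hx.2), (hSd x).deriv, ← hAx]
  simp only [NonlocalDispersal.nonlocalOp]
  field_simp [(hApos x).ne']
  ring
end

section
/- Let g, h : [0,T] → ℝ be differentiable with g(t) ≤ h(t) for all t ∈ [0,T], and let S : [0,T] × ℝ → ℝ be measurable with 0 ≤ S(t,x) ≤ M for all (t,x). Suppose that for all t ∈ [0,T], h′(t) = μ ∫_{g(t)}^{h(t)} ∫_{h(t)}^∞ J(x−y) S(t,x) dy dx and g′(t) = −μ ∫_{g(t)}^{h(t)} ∫_{−∞}^{g(t)} J(x−y) S(t,x) dy dx. Then for all t ∈ [0,T]: 0 ≤ h′(t) ≤ μM·(h(t)−g(t)) and 0 ≤ −g′(t) ≤ μM·(h(t)−g(t)) (so h is nondecreasing and g is nonincreasing), and h(t) − g(t) ≤ (h(0) − g(0))·e^{2μMt}. -/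
/-!
A translate of the kernel `J` carries mass at most `∫ J = 1` on any set, and `0 ≤ S ≤ M`,
so each flux integrand lies in `[0, M]`; integrating over `[g t, h t]` bounds both boundary speeds
by `μ M (h t - g t)`. Hence `h' ≥ 0 ≥ g'`, and the length `h - g` satisfies
`(h - g)' ≤ 2 μ M (h - g)`, so Grönwall's inequality gives the exponential bound.
-/

open MeasureTheory Set

lemma setIntegral_comp_sub_mem_Icc {J : ℝ → ℝ} (hJnn : ∀ x, 0 ≤ J x)
    (hJint : Integrable J) (hJ1 : ∫ x, J x = 1) (s : Set ℝ) (x : ℝ) :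
    ∫ y in s, J (x - y) ∈ Icc (0 : ℝ) 1 := by
  refine ⟨integral_nonneg fun y => hJnn _, ?_⟩
  calc ∫ y in s, J (x - y)
      ≤ ∫ y, J (x - y) :=
        setIntegral_le_integral (hJint.comp_sub_left x) (.of_forall fun _ => hJnn _)
    _ = ∫ y, J y := integral_sub_left_eq_self J _ x
    _ = 1 := hJ1

lemma intervalIntegral_mem_Icc_of_forall_mem_Icc {F : ℝ → ℝ} {M a b : ℝ} (hab : a ≤ b)
    (hF : ∀ x, F x ∈ Icc 0 M) :
    ∫ x in a..b, F x ∈ Icc 0 (M * (b - a)) := by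
  refine ⟨intervalIntegral.integral_nonneg hab fun x _ => (hF x).1, ?_⟩
  calc ∫ x in a..b, F x
      ≤ ‖∫ x in a..b, F x‖ := Real.le_norm_self _
    _ ≤ M * |b - a| := intervalIntegral.norm_integral_le_of_norm_le_const fun x _ => by
        rw [Real.norm_of_nonneg (hF x).1]; exact (hF x).2
    _ = M * (b - a) := by rw [abs_of_nonneg (sub_nonneg.2 hab)]

lemma flux_mem_Icc {J : ℝ → ℝ} (hJnn : ∀ x, 0 ≤ J x) (hJint : Integrable J)
    (hJ1 : ∫ x, J x = 1) {S : ℝ → ℝ} {M : ℝ} (hS : ∀ x, S x ∈ Icc 0 M) (s : Set ℝ)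
    {a b : ℝ} (hab : a ≤ b) :
    ∫ x in a..b, (∫ y in s, J (x - y)) * S x ∈ Icc 0 (M * (b - a)) := by
  refine intervalIntegral_mem_Icc_of_forall_mem_Icc hab fun x => ?_
  obtain ⟨hJ0, hJle⟩ := setIntegral_comp_sub_mem_Icc hJnn hJint hJ1 s x
  obtain ⟨hS0, hSM⟩ := hS x
  exact ⟨mul_nonneg hJ0 hS0, by nlinarith⟩

section DerivWithinIcc

variable {f : ℝ → ℝ} {a b : ℝ}

lemma hasDerivWithinAt_Ioo_of_differentiableWithinAt_Icc
    (hf : ∀ t ∈ Icc a b, DifferentiableWithinAt ℝ f (Icc a b) t) :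
    ∀ t ∈ interior (Icc a b),
      HasDerivWithinAt f (derivWithin f (Icc a b) t) (interior (Icc a b)) t := by
  intro t ht
  rw [interior_Icc] at ht ⊢
  exact (hf t (Ioo_subset_Icc_self ht)).hasDerivWithinAt.mono Ioo_subset_Icc_self

lemma monotoneOn_Icc_of_derivWithin_nonneg
    (hf : ∀ t ∈ Icc a b, DifferentiableWithinAt ℝ f (Icc a b) t)
    (hf' : ∀ t ∈ Icc a b, 0 ≤ derivWithin f (Icc a b) t) :
    MonotoneOn f (Icc a b) :=
  monotoneOn_of_hasDerivWithinAt_nonneg (convex_Icc a b)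
    (fun t ht => (hf t ht).continuousWithinAt)
    (hasDerivWithinAt_Ioo_of_differentiableWithinAt_Icc hf)
    fun t ht => hf' t (interior_subset ht)

lemma antitoneOn_Icc_of_derivWithin_nonpos
    (hf : ∀ t ∈ Icc a b, DifferentiableWithinAt ℝ f (Icc a b) t)
    (hf' : ∀ t ∈ Icc a b, derivWithin f (Icc a b) t ≤ 0) :
    AntitoneOn f (Icc a b) :=
  antitoneOn_of_hasDerivWithinAt_nonpos (convex_Icc a b)
    (fun t ht => (hf t ht).continuousWithinAt)
    (hasDerivWithinAt_Ioo_of_differentiableWithinAt_Icc hf)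
    fun t ht => hf' t (interior_subset ht)

lemma le_mul_exp_of_derivWithin_le {K : ℝ}
    (hf : ∀ t ∈ Icc a b, DifferentiableWithinAt ℝ f (Icc a b) t)
    (bound : ∀ t ∈ Ico a b, derivWithin f (Icc a b) t ≤ K * f t) :
    ∀ t ∈ Icc a b, f t ≤ f a * Real.exp (K * (t - a)) := by
  intro t ht
  have hright : ∀ t ∈ Ico a b, HasDerivWithinAt f (derivWithin f (Icc a b) t) (Ici t) t :=
    fun t ht => (hf t (Ico_subset_Icc_self ht)).hasDerivWithinAt.mono_of_mem_nhdsWithin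
      (Icc_mem_nhdsGE_of_mem ht)
  have := le_gronwallBound_of_liminf_deriv_right_le (fun t ht => (hf t ht).continuousWithinAt)
    (fun t ht r hr => (hright t ht).liminf_right_slope_le hr) le_rfl
    (fun t ht => (bound t ht).trans_eq (add_zero _).symm) t ht
  rwa [gronwallBound_ε0] at this

end DerivWithinIcc

theorem free_boundary_bounds_general
    (J : ℝ → ℝ) (hJnn : ∀ x, 0 ≤ J x) (hJint : Integrable J) (hJ1 : (∫ x, J x) = 1)
    (mu M T : ℝ) (hmu : 0 < mu)
    (g h : ℝ → ℝ)
    (hgd : ∀ t ∈ Icc (0:ℝ) T, DifferentiableWithinAt ℝ g (Icc 0 T) t)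
    (hhd : ∀ t ∈ Icc (0:ℝ) T, DifferentiableWithinAt ℝ h (Icc 0 T) t)
    (hgh : ∀ t ∈ Icc (0:ℝ) T, g t ≤ h t)
    (S : ℝ → ℝ → ℝ)
    (hSb : ∀ t x, 0 ≤ S t x ∧ S t x ≤ M)
    (hode : ∀ t ∈ Icc (0:ℝ) T,
      derivWithin h (Icc 0 T) t =
        mu * ∫ x in g t..h t, (∫ y in Ioi (h t), J (x - y)) * S t x)
    (gode : ∀ t ∈ Icc (0:ℝ) T,
      derivWithin g (Icc 0 T) t =
        -(mu * ∫ x in g t..h t, (∫ y in Iio (g t), J (x - y)) * S t x)) :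
    (∀ t ∈ Icc (0:ℝ) T,
      0 ≤ derivWithin h (Icc 0 T) t ∧
      derivWithin h (Icc 0 T) t ≤ mu * M * (h t - g t) ∧
      0 ≤ -derivWithin g (Icc 0 T) t ∧
      -derivWithin g (Icc 0 T) t ≤ mu * M * (h t - g t)) ∧
    MonotoneOn h (Icc 0 T) ∧ AntitoneOn g (Icc 0 T) ∧
    (∀ t ∈ Icc (0:ℝ) T, h t - g t ≤ (h 0 - g 0) * Real.exp (2 * mu * M * t)) := by
  have speed : ∀ t ∈ Icc (0:ℝ) T,
      0 ≤ derivWithin h (Icc 0 T) t ∧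
      derivWithin h (Icc 0 T) t ≤ mu * M * (h t - g t) ∧
      0 ≤ -derivWithin g (Icc 0 T) t ∧
      -derivWithin g (Icc 0 T) t ≤ mu * M * (h t - g t) := by
    intro t ht
    obtain ⟨hflux0, hfluxM⟩ := flux_mem_Icc hJnn hJint hJ1 (hSb t) (Ioi (h t)) (hgh t ht)
    obtain ⟨gflux0, gfluxM⟩ := flux_mem_Icc hJnn hJint hJ1 (hSb t) (Iio (g t)) (hgh t ht)
    rw [hode t ht, gode t ht, neg_neg, mul_assoc]
    exact ⟨by positivity, by gcongr, by positivity, by gcongr⟩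
  refine ⟨speed, monotoneOn_Icc_of_derivWithin_nonneg hhd fun t ht => (speed t ht).1,
    antitoneOn_Icc_of_derivWithin_nonpos hgd fun t ht => neg_nonneg.1 (speed t ht).2.2.1, ?_⟩
  have length_bound : ∀ t ∈ Ico (0:ℝ) T,
      derivWithin (h - g) (Icc 0 T) t ≤ 2 * mu * M * (h - g) t := by
    intro t ht
    obtain ⟨-, hle, -, gle⟩ := speed t (Ico_subset_Icc_self ht)
    rw [derivWithin_sub (hhd t (Ico_subset_Icc_self ht)) (hgd t (Ico_subset_Icc_self ht))]
    simp only [Pi.sub_apply]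
    linarith
  intro t ht
  simpa using le_mul_exp_of_derivWithin_le (fun t ht => (hhd t ht).sub (hgd t ht)) length_bound t ht

/-- quantitative bounds on the free boundaries: the speeds are
controlled by the habitat length, `h` is nondecreasing, `g` is nonincreasing, and the
habitat length grows at most exponentially. -/
theorem free_boundary_bounds
    (J : ℝ → ℝ) (hJnn : ∀ x, 0 ≤ J x) (hJint : Integrable J) (hJ1 : (∫ x, J x) = 1)
    (mu M T : ℝ) (hmu : 0 < mu) (hM : 0 ≤ M) (hT : 0 < T)
    (g h : ℝ → ℝ)
    (hgd : ∀ t ∈ Icc (0:ℝ) T, DifferentiableWithinAt ℝ g (Icc 0 T) t)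
    (hhd : ∀ t ∈ Icc (0:ℝ) T, DifferentiableWithinAt ℝ h (Icc 0 T) t)
    (hgh : ∀ t ∈ Icc (0:ℝ) T, g t ≤ h t)
    (S : ℝ → ℝ → ℝ)
    (hSm : Measurable (fun p : ℝ × ℝ => S p.1 p.2))
    (hSb : ∀ t x, 0 ≤ S t x ∧ S t x ≤ M)
    (hode : ∀ t ∈ Icc (0:ℝ) T,
      derivWithin h (Icc 0 T) t =
        mu * ∫ x in g t..h t, (∫ y in Ioi (h t), J (x - y)) * S t x)
    (gode : ∀ t ∈ Icc (0:ℝ) T,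
      derivWithin g (Icc 0 T) t =
        -(mu * ∫ x in g t..h t, (∫ y in Iio (g t), J (x - y)) * S t x)) :
    (∀ t ∈ Icc (0:ℝ) T,
      0 ≤ derivWithin h (Icc 0 T) t ∧
      derivWithin h (Icc 0 T) t ≤ mu * M * (h t - g t) ∧
      0 ≤ -derivWithin g (Icc 0 T) t ∧
      -derivWithin g (Icc 0 T) t ≤ mu * M * (h t - g t)) ∧
    MonotoneOn h (Icc 0 T) ∧ AntitoneOn g (Icc 0 T) ∧
    (∀ t ∈ Icc (0:ℝ) T, h t - g t ≤ (h 0 - g 0) * Real.exp (2 * mu * M * t)) :=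
  free_boundary_bounds_general J hJnn hJint hJ1 mu M T hmu g h hgd hhd hgh S hSb hode gode
end
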